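/- Let 𝐋 be a symmetric positive semidefinite d×d matrix, f : ℝ^d → ℝ differentiable, μ > 0, and x* ∈ ℝ^d a point such that μ ‖x − x*‖²_𝐋 + ‖∇f(x)‖² ≤ 2 ⟨∇f(x), x − x*⟩_𝐋 for all x ∈ ℝ^d, where ⟨u, v⟩_𝐋 = uᵀ 𝐋 v and ‖u‖²_𝐋 = uᵀ 𝐋 u. Let S be a proper sampling with sketch C, and let γ satisfy 0 < γ ≤ 1/λmax(P̄ ∘ 𝐋) and γμ ≤ 1. Define random iterates by a fixed x^0 and x^{k+1} = x^k − γ C_k ∇f(x^k) with C_0, C_1, … independent copies of C. Then for every k ≥ 0, E[‖x^k − x*‖²_𝐋] ≤ (1 − γμ)^k ‖x^0 − x*‖²_𝐋. -/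

import Mathlib

open scoped BigOperators RealInnerProductSpace
open Matrix

noncomputable section

/-- A proper sampling on `{1,…,d}`: a finitely supported probability distribution over
subsets of `Fin d` whose marginal probabilities are all positive. -/
structure Sampling (d : ℕ) where
  prob : Finset (Fin d) → ℝ
  nonneg : ∀ S, 0 ≤ prob S
  total : ∑ S : Finset (Fin d), prob S = 1
  margPos : ∀ j : Fin d, 0 < ∑ S : Finset (Fin d), if j ∈ S then prob S else 0

namespace Sampling

variable {d : ℕ} (μ : Sampling d)

/-- Marginal probability `p_j = Prob(j ∈ S)`. -/
def marg (j : Fin d) : ℝ := ∑ S : Finset (Fin d), if j ∈ S then μ.prob S else 0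

/-- Probability matrix `P`, with entries `p_{jl} = Prob({j,l} ⊆ S)`. -/
def probMatrix : Matrix (Fin d) (Fin d) ℝ :=
  Matrix.of fun j l => ∑ S : Finset (Fin d), if j ∈ S ∧ l ∈ S then μ.prob S else 0

/-- The matrix `P̄` with entries `p_{jl}/(p_j p_l)`. -/
def Pbar : Matrix (Fin d) (Fin d) ℝ :=
  Matrix.of fun j l => μ.probMatrix j l / (μ.marg j * μ.marg l)

/-- The matrix `P̃ = P̄ − E` where `E` is the all-ones matrix. -/
def Ptilde : Matrix (Fin d) (Fin d) ℝ := μ.Pbar - Matrix.of fun _ _ => (1 : ℝ)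

/-- The unbiased diagonal sketch `C` associated with a realization `S` of the sampling. -/
def sketch (S : Finset (Fin d)) : Matrix (Fin d) (Fin d) ℝ :=
  Matrix.diagonal fun j => if j ∈ S then (μ.marg j)⁻¹ else 0

end Sampling

/-- Largest eigenvalue of a symmetric matrix, via the Rayleigh quotient. -/
def lambdaMax {d : ℕ} (M : Matrix (Fin d) (Fin d) ℝ) : ℝ :=
  sSup {r : ℝ | ∃ v : Fin d → ℝ, v ⬝ᵥ v = 1 ∧ r = v ⬝ᵥ M.mulVec v}

/-- Smallest eigenvalue of a symmetric matrix, via the Rayleigh quotient. -/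
def lambdaMin {d : ℕ} (M : Matrix (Fin d) (Fin d) ℝ) : ℝ :=
  sInf {r : ℝ | ∃ v : Fin d → ℝ, v ⬝ᵥ v = 1 ∧ r = v ⬝ᵥ M.mulVec v}

/-- `Mdag` is the Moore–Penrose pseudoinverse of `M`. -/
def IsMoorePenrose {m n : Type*} [Fintype m] [Fintype n]
    (M : Matrix m n ℝ) (Mdag : Matrix n m ℝ) : Prop :=
  M * Mdag * M = M ∧ Mdag * M * Mdag = Mdag ∧
    (M * Mdag)ᵀ = M * Mdag ∧ (Mdag * M)ᵀ = Mdag * M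

/-- Vectors in `ℝ^d` with the Euclidean inner product. -/
abbrev Vec (d : ℕ) := EuclideanSpace ℝ (Fin d)

/-- Action of a matrix on a Euclidean vector. -/
def mact {d e : ℕ} (M : Matrix (Fin e) (Fin d) ℝ) (x : Vec d) : Vec e :=
  Matrix.toEuclideanLin M x

/-- Quadratic form `xᵀ M x`, i.e. the squared `M`-seminorm `‖x‖²_M`. -/
def quad {d : ℕ} (M : Matrix (Fin d) (Fin d) ℝ) (x : Vec d) : ℝ := ⟪x, mact M x⟫

/-- `f` is `M`-smooth: `f x ≤ f y + ⟨∇f(y), x−y⟩ + ½ (x−y)ᵀ M (x−y)` for all `x, y`. -/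
def MSmooth {d : ℕ} (f : Vec d → ℝ) (M : Matrix (Fin d) (Fin d) ℝ) : Prop :=
  ∀ x y : Vec d, f x ≤ f y + ⟪gradient f y, x - y⟫ + (1 / 2) * quad M (x - y)

/-- Random iterates driven by i.i.d. draws: `traj x0 step k ω` is the `k`-th iterate along
the sample path `ω` of `k` draws. -/
def traj {V Ω : Type*} (x0 : V) (step : V → Ω → V) : ∀ k : ℕ, (Fin k → Ω) → V
  | 0, _ => x0
  | k + 1, ω => step (traj x0 step k fun i => ω i.castSucc) (ω (Fin.last k))

/-- Expectation `E[φ(x^k)]` of a functional of the `k`-th iterate, over `k` i.i.d. draws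
with one-step distribution `P`. -/
def trajExp {V Ω : Type*} [Fintype Ω] (P : Ω → ℝ) (x0 : V) (step : V → Ω → V)
    (φ : V → ℝ) (k : ℕ) : ℝ :=
  ∑ ω : Fin k → Ω, (∏ i, P (ω i)) * φ (traj x0 step k ω)

/-! Unbiasedness of the sketch, `E[C] = I`, and its second moment, `E[Cᵀ 𝐋 C] = P̄ ∘ 𝐋`, give
`E‖x⁺ − x*‖²_𝐋 = ‖x − x*‖²_𝐋 − 2γ⟨∇f(x), x − x*⟩_𝐋 + γ² ∇f(x)ᵀ (P̄ ∘ 𝐋) ∇f(x)` for one step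
`x⁺ = x − γ C ∇f(x)`. The step size bounds the last term by `γ‖∇f(x)‖²`, and the hypothesis on
`x*` then turns the right-hand side into at most `(1 − γμ)‖x − x*‖²_𝐋`. Conditioning on the first
`k` draws iterates this one-step contraction. -/

open Finset

lemma bddAbove_rayleigh {n : Type*} [Fintype n] (M : Matrix n n ℝ) :
    BddAbove {r : ℝ | ∃ v : n → ℝ, v ⬝ᵥ v = 1 ∧ r = v ⬝ᵥ M *ᵥ v} := by
  have hsub : {r : ℝ | ∃ v : n → ℝ, v ⬝ᵥ v = 1 ∧ r = v ⬝ᵥ M *ᵥ v} ⊆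
      (fun v => v ⬝ᵥ M *ᵥ v) '' Metric.closedBall 0 1 := by
    rintro _ ⟨v, hv, rfl⟩
    refine ⟨v, ?_, rfl⟩
    rw [mem_closedBall_zero_iff, pi_norm_le_iff_of_nonneg zero_le_one]
    intro i
    rw [Real.norm_eq_abs, abs_le_one_iff_mul_self_le_one, ← hv]
    exact single_le_sum (fun j _ => mul_self_nonneg (v j)) (mem_univ i)
  have hcont : Continuous fun v : n → ℝ => v ⬝ᵥ M *ᵥ v :=
    continuous_id.dotProduct (continuous_const.matrix_mulVec continuous_id)
  exact ((isCompact_closedBall 0 1).image hcont).bddAbove.mono hsub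

lemma dotProduct_mulVec_le_lambdaMax_mul {d : ℕ} (M : Matrix (Fin d) (Fin d) ℝ)
    (v : Fin d → ℝ) : v ⬝ᵥ M *ᵥ v ≤ lambdaMax M * (v ⬝ᵥ v) := by
  rcases eq_or_ne v 0 with rfl | hv
  · simp
  have ht : 0 < v ⬝ᵥ v := lt_of_le_of_ne (Fintype.sum_nonneg fun i => mul_self_nonneg (v i))
    (Ne.symm (dotProduct_self_eq_zero.not.mpr hv))
  set s := Real.sqrt (v ⬝ᵥ v)
  have hs : s * s = v ⬝ᵥ v := Real.mul_self_sqrt ht.le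
  have hunit : s⁻¹ • v ⬝ᵥ s⁻¹ • v = 1 := by
    rw [smul_dotProduct, dotProduct_smul, smul_eq_mul, smul_eq_mul, ← mul_assoc, ← mul_inv,
      hs, inv_mul_cancel₀ ht.ne']
  have hquot : s⁻¹ • v ⬝ᵥ M *ᵥ (s⁻¹ • v) = (v ⬝ᵥ M *ᵥ v) / (v ⬝ᵥ v) := by
    rw [smul_dotProduct, mulVec_smul, dotProduct_smul, smul_eq_mul, smul_eq_mul, ← mul_assoc,
      ← mul_inv, hs, inv_mul_eq_div]
  have hle : (v ⬝ᵥ M *ᵥ v) / (v ⬝ᵥ v) ≤ lambdaMax M :=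
    le_csSup (bddAbove_rayleigh M) ⟨_, hunit, hquot.symm⟩
  rwa [div_le_iff₀ ht] at hle

namespace Sampling

variable {d : ℕ} (μ : Sampling d)

lemma sum_prob_smul_sketch : ∑ S, μ.prob S • μ.sketch S = 1 := by
  ext j l
  simp only [Matrix.sum_apply, Matrix.smul_apply, sketch, diagonal_apply, smul_eq_mul,
    one_apply]
  split_ifs with hjl
  · subst hjl
    calc ∑ S, μ.prob S * (if j ∈ S then (μ.marg j)⁻¹ else 0)
        = μ.marg j * (μ.marg j)⁻¹ := by
          rw [marg, sum_mul]
          exact sum_congr rfl fun S _ => by split_ifs <;> simp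
      _ = 1 := mul_inv_cancel₀ (μ.margPos j).ne'
  · simp

lemma sum_prob_smul_transpose_sketch_mul_mul_sketch (L : Matrix (Fin d) (Fin d) ℝ) :
    ∑ S, μ.prob S • ((μ.sketch S)ᵀ * L * μ.sketch S) = μ.Pbar ⊙ L := by
  ext j l
  simp only [Matrix.sum_apply, Matrix.smul_apply, sketch, diagonal_transpose, diagonal_mul,
    mul_diagonal, hadamard_apply, Pbar, probMatrix, of_apply, smul_eq_mul, div_eq_mul_inv,
    sum_mul]
  refine sum_congr rfl fun S _ => ?_
  split_ifs <;> simp_all; ring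

end Sampling

section WeightedQuadratic

variable {ι n : Type*} [Fintype n]

lemma mulVec_dotProduct_mulVec_mulVec (C M : Matrix n n ℝ) (g : n → ℝ) :
    C *ᵥ g ⬝ᵥ M *ᵥ (C *ᵥ g) = g ⬝ᵥ (Cᵀ * M * C) *ᵥ g := by
  rw [← mulVec_mulVec, ← mulVec_mulVec, dotProduct_transpose_mulVec, dotProduct_comm]

lemma sum_mul_quadratic_sub_smul_mulVec [Fintype ι] [DecidableEq n]
    (w : ι → ℝ) (C : ι → Matrix n n ℝ) (hw : ∑ i, w i = 1) (hC : ∑ i, w i • C i = 1)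
    {L : Matrix n n ℝ} (hL : Lᵀ = L) (y g : n → ℝ) (γ : ℝ) :
    ∑ i, w i * ((y - γ • C i *ᵥ g) ⬝ᵥ L *ᵥ (y - γ • C i *ᵥ g))
      = y ⬝ᵥ L *ᵥ y - 2 * γ * (g ⬝ᵥ L *ᵥ y)
        + γ ^ 2 * (g ⬝ᵥ (∑ i, w i • ((C i)ᵀ * L * C i)) *ᵥ g) := by
  have hexpand : ∀ c : n → ℝ, (y - γ • c) ⬝ᵥ L *ᵥ (y - γ • c)
      = y ⬝ᵥ L *ᵥ y - 2 * γ * (c ⬝ᵥ L *ᵥ y) + γ ^ 2 * (c ⬝ᵥ L *ᵥ c) := by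
    intro c
    have hsymm : y ⬝ᵥ L *ᵥ c = c ⬝ᵥ L *ᵥ y := by
      rw [← dotProduct_transpose_mulVec, hL]
    simp only [mulVec_sub, mulVec_smul, dotProduct_sub, sub_dotProduct, dotProduct_smul,
      smul_dotProduct, smul_eq_mul, hsymm]
    ring
  have hfirst : ∑ i, w i * (C i *ᵥ g ⬝ᵥ L *ᵥ y) = g ⬝ᵥ L *ᵥ y := by
    simp only [← smul_eq_mul, ← smul_dotProduct, ← smul_mulVec, ← sum_dotProduct, ← sum_mulVec,
      hC, one_mulVec]
  have hsecond : ∑ i, w i * (C i *ᵥ g ⬝ᵥ L *ᵥ (C i *ᵥ g))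
      = g ⬝ᵥ (∑ i, w i • ((C i)ᵀ * L * C i)) *ᵥ g := by
    simp only [mulVec_dotProduct_mulVec_mulVec, sum_mulVec, dotProduct_sum, smul_mulVec,
      dotProduct_smul, smul_eq_mul]
  simp only [hexpand, mul_add, mul_sub, sum_add_distrib, sum_sub_distrib, mul_left_comm (w _),
    ← mul_sum, ← sum_mul, hw, one_mul, hfirst, hsecond]

end WeightedQuadratic

section Euclidean

variable {d : ℕ}

lemma mact_ofLp (M : Matrix (Fin d) (Fin d) ℝ) (x : Vec d) :
    (mact M x).ofLp = M *ᵥ x.ofLp :=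
  rfl

lemma inner_mact (M : Matrix (Fin d) (Fin d) ℝ) (x y : Vec d) :
    ⟪x, mact M y⟫ = x.ofLp ⬝ᵥ M *ᵥ y.ofLp := by
  rw [EuclideanSpace.inner_eq_star_dotProduct, star_trivial, dotProduct_comm, mact_ofLp]

lemma quad_eq_dotProduct (M : Matrix (Fin d) (Fin d) ℝ) (x : Vec d) :
    quad M x = x.ofLp ⬝ᵥ M *ᵥ x.ofLp :=
  inner_mact M x x

lemma norm_sq_eq_dotProduct (x : Vec d) : ‖x‖ ^ 2 = x.ofLp ⬝ᵥ x.ofLp := by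
  rw [← real_inner_self_eq_norm_sq, EuclideanSpace.inner_eq_star_dotProduct, star_trivial]

lemma Sampling.sum_prob_mul_quad_step_le (μ : Sampling d) {L : Matrix (Fin d) (Fin d) ℝ}
    (hL : Lᵀ = L) {mu γ : ℝ} (hγ : 0 < γ) (hγ' : γ ≤ 1 / lambdaMax (μ.Pbar ⊙ L))
    {x xstar g : Vec d}
    (hg : mu * quad L (x - xstar) + ‖g‖ ^ 2 ≤ 2 * ⟪g, mact L (x - xstar)⟫) :
    ∑ S, μ.prob S * quad L (x - γ • mact (μ.sketch S) g - xstar)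
      ≤ (1 - γ * mu) * quad L (x - xstar) := by
  set y : Fin d → ℝ := (x - xstar).ofLp
  set v : Fin d → ℝ := g.ofLp
  have hexp : ∑ S, μ.prob S * quad L (x - γ • mact (μ.sketch S) g - xstar)
      = y ⬝ᵥ L *ᵥ y - 2 * γ * (v ⬝ᵥ L *ᵥ y) + γ ^ 2 * (v ⬝ᵥ (μ.Pbar ⊙ L) *ᵥ v) := by
    have hstep : ∀ S, (x - γ • mact (μ.sketch S) g - xstar).ofLp = y - γ • μ.sketch S *ᵥ v := by
      intro S
      simp only [y, v, WithLp.ofLp_sub, WithLp.ofLp_smul, mact_ofLp]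
      abel
    simp only [quad_eq_dotProduct, hstep]
    rw [sum_mul_quadratic_sub_smul_mulVec _ _ μ.total μ.sum_prob_smul_sketch hL,
      μ.sum_prob_smul_transpose_sketch_mul_mul_sketch]
  have hlam : 0 < lambdaMax (μ.Pbar ⊙ L) := by
    by_contra h
    linarith [one_div_nonpos.mpr (not_lt.mp h)]
  have hγlam : γ * lambdaMax (μ.Pbar ⊙ L) ≤ 1 := (le_div_iff₀ hlam).mp hγ'
  have hsecond : γ ^ 2 * (v ⬝ᵥ (μ.Pbar ⊙ L) *ᵥ v) ≤ γ * (v ⬝ᵥ v) := by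
    have hvv : 0 ≤ v ⬝ᵥ v := Fintype.sum_nonneg fun i => mul_self_nonneg (v i)
    calc γ ^ 2 * (v ⬝ᵥ (μ.Pbar ⊙ L) *ᵥ v)
        ≤ γ ^ 2 * (lambdaMax (μ.Pbar ⊙ L) * (v ⬝ᵥ v)) := by
          gcongr; exact dotProduct_mulVec_le_lambdaMax_mul _ v
      _ = γ * (γ * lambdaMax (μ.Pbar ⊙ L)) * (v ⬝ᵥ v) := by ring
      _ ≤ γ * 1 * (v ⬝ᵥ v) := by gcongr
      _ = γ * (v ⬝ᵥ v) := by ring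
  rw [quad_eq_dotProduct, norm_sq_eq_dotProduct, inner_mact] at hg
  rw [hexp, quad_eq_dotProduct]
  linarith [mul_le_mul_of_nonneg_left hg hγ.le]

end Euclidean

section Trajectory

variable {V Ω : Type*} [Fintype Ω] (P : Ω → ℝ) (x0 : V) (step : V → Ω → V)

lemma trajExp_succ (φ : V → ℝ) (k : ℕ) :
    trajExp P x0 step φ (k + 1) = trajExp P x0 step (fun x => ∑ s, P s * φ (step x s)) k := by
  rw [trajExp, ← (Fin.snocEquiv fun _ => Ω).sum_comp, Fintype.sum_prod_type, sum_comm]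
  refine sum_congr rfl fun ω _ => ?_
  rw [mul_sum]
  refine sum_congr rfl fun s _ => ?_
  simp only [Fin.snocEquiv_apply, traj, Fin.snoc_castSucc, Fin.snoc_last, Fin.prod_univ_castSucc]
  ring

lemma trajExp_mono (hP : ∀ s, 0 ≤ P s) {φ ψ : V → ℝ} (h : ∀ x, φ x ≤ ψ x) (k : ℕ) :
    trajExp P x0 step φ k ≤ trajExp P x0 step ψ k :=
  sum_le_sum fun ω _ => mul_le_mul_of_nonneg_left (h _) (prod_nonneg fun i _ => hP (ω i))

lemma trajExp_const_mul (c : ℝ) (φ : V → ℝ) (k : ℕ) :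
    trajExp P x0 step (fun x => c * φ x) k = c * trajExp P x0 step φ k := by
  rw [trajExp, trajExp, mul_sum]
  exact sum_congr rfl fun ω _ => mul_left_comm _ _ _

lemma trajExp_le_pow_mul (hP : ∀ s, 0 ≤ P s) {φ : V → ℝ} {ρ : ℝ} (hρ : 0 ≤ ρ)
    (hstep : ∀ x, ∑ s, P s * φ (step x s) ≤ ρ * φ x) (k : ℕ) :
    trajExp P x0 step φ k ≤ ρ ^ k * φ x0 := by
  induction k with
  | zero => simp [trajExp, traj]
  | succ k ih =>
    calc trajExp P x0 step φ (k + 1)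
        ≤ trajExp P x0 step (fun x => ρ * φ x) k := by
          rw [trajExp_succ]; exact trajExp_mono P x0 step hP hstep k
      _ = ρ * trajExp P x0 step φ k := trajExp_const_mul P x0 step ρ φ k
      _ ≤ ρ ^ (k + 1) * φ x0 := by rw [pow_succ', mul_assoc]; gcongr

end Trajectory

theorem statement6_general {d : ℕ} (μsamp : Sampling d) (f : Vec d → ℝ)
    (LL : Matrix (Fin d) (Fin d) ℝ) (hLL : LL.PosSemidef)
    (mu : ℝ) (xstar : Vec d)
    (hcond : ∀ x : Vec d,
      mu * quad LL (x - xstar) + ‖gradient f x‖ ^ 2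
        ≤ 2 * ⟪gradient f x, mact LL (x - xstar)⟫)
    (γ : ℝ) (hγ : 0 < γ) (hγ' : γ ≤ 1 / lambdaMax (Matrix.hadamard μsamp.Pbar LL))
    (hγμ : γ * mu ≤ 1) (x0 : Vec d) :
    ∀ k : ℕ,
      trajExp μsamp.prob x0 (fun x S => x - γ • mact (μsamp.sketch S) (gradient f x))
          (fun x => quad LL (x - xstar)) k
        ≤ (1 - γ * mu) ^ k * quad LL (x0 - xstar) := by
  have hsymm : LLᵀ = LL := by simpa using hLL.1.eq
  exact trajExp_le_pow_mul _ _ _ μsamp.nonneg (by linarith)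
    fun x => μsamp.sum_prob_mul_quad_step_le hsymm hγ hγ' (hcond x)

/-- SkGD convergence in the weighted norm `‖·‖²_𝐋`. Under the condition
`μ‖x−x*‖²_𝐋 + ‖∇f(x)‖² ≤ 2⟨∇f(x), x−x*⟩_𝐋` and step size `0 < γ ≤ 1/λmax(P̄ ∘ 𝐋)`,
`γμ ≤ 1`, one has `E[‖x^k − x*‖²_𝐋] ≤ (1 − γμ)^k ‖x^0 − x*‖²_𝐋`. -/
theorem statement6 {d : ℕ} (μsamp : Sampling d) (f : Vec d → ℝ)
    (LL : Matrix (Fin d) (Fin d) ℝ) (hLL : LL.PosSemidef)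
    (hdiff : Differentiable ℝ f) (mu : ℝ) (hmu : 0 < mu) (xstar : Vec d)
    (hcond : ∀ x : Vec d,
      mu * quad LL (x - xstar) + ‖gradient f x‖ ^ 2
        ≤ 2 * ⟪gradient f x, mact LL (x - xstar)⟫)
    (γ : ℝ) (hγ : 0 < γ) (hγ' : γ ≤ 1 / lambdaMax (Matrix.hadamard μsamp.Pbar LL))
    (hγμ : γ * mu ≤ 1) (x0 : Vec d) :
    ∀ k : ℕ,
      trajExp μsamp.prob x0 (fun x S => x - γ • mact (μsamp.sketch S) (gradient f x))
          (fun x => quad LL (x - xstar)) k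
        ≤ (1 - γ * mu) ^ k * quad LL (x0 - xstar) :=
  statement6_general μsamp f LL hLL mu xstar hcond γ hγ hγ' hγμ x0
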